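/- Let q : Ĝ → G be a group homomorphism whose kernel A = ker q is contained in the center of Ĝ, ℤ₂ = {±1}, and let σ : ℤ₂ → Aut(G), σ̂ : ℤ₂ → Aut(Ĝ) be group homomorphisms satisfying q ∘ σ̂(ε) = σ(ε) ∘ q. Let I be a type, ε : I → I → ℤ₂ satisfy ε i j · ε j k = ε i k, let g : I → I → G satisfy g i j · σ(ε i j)(g j k) = g i k, and let ĝ : I → I → Ĝ satisfy q(ĝ i j) = g i j. Define a i j k := ĝ i j · σ̂(ε i j)(ĝ j k) · (ĝ i k)⁻¹. Then for all i,j,k,l one has the twisted Čech 2-cocycle identity a i j k · a i k l = σ̂(ε i j)(a j k l) · a i j l. -/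

import Mathlib

/-!
Modulo `A`, the twisted coboundary of the lifts `ghat` is the coboundary of the twisted cocycle
`g`, hence trivial, so it takes values in the central subgroup `A`. Without any centrality one
has `a i j k · a i k l = ghat i j · σ̂(ε i j)(a j k l) · (ghat i j)⁻¹ · a i j l`, and the conjugation
disappears because `σ̂` preserves `A`.
-/

section TwistedDefect

variable {M H : Type*} [Monoid M] [Group H] {I : Type*}

def twistedDefect (σ : M →* MulAut H) (ε : I → I → M) (h : I → I → H) (i j k : I) : H :=
  h i j * σ (ε i j) (h j k) * (h i k)⁻¹

theorem twistedDefect_eq_one_iff (σ : M →* MulAut H) (ε : I → I → M) (h : I → I → H)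
    (i j k : I) : twistedDefect σ ε h i j k = 1 ↔ h i j * σ (ε i j) (h j k) = h i k :=
  mul_inv_eq_one

theorem map_twistedDefect {K : Type*} [Group K] (q : H →* K) (σ : M →* MulAut H)
    (τ : M →* MulAut K) (hcompat : ∀ (e : M) (x : H), q (σ e x) = τ e (q x))
    (ε : I → I → M) (h : I → I → H) (i j k : I) :
    q (twistedDefect σ ε h i j k) = twistedDefect τ ε (fun i j => q (h i j)) i j k := by
  simp only [twistedDefect, map_mul, map_inv, hcompat]

theorem twistedDefect_mul_twistedDefect (σ : M →* MulAut H) {ε : I → I → M}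
    (hε : ∀ i j k, ε i j * ε j k = ε i k) (h : I → I → H) (i j k l : I) :
    twistedDefect σ ε h i j k * twistedDefect σ ε h i k l =
      h i j * σ (ε i j) (twistedDefect σ ε h j k l) * (h i j)⁻¹ * twistedDefect σ ε h i j l := by
  have hcomp : σ (ε i j) (σ (ε j k) (h k l)) = σ (ε i k) (h k l) := by
    rw [← hε i j k, map_mul, MulAut.mul_apply]
  simp only [twistedDefect, map_mul, map_inv, hcomp]
  group

end TwistedDefect

/-- With `A = ker q` central in `Ghat`, `ε` a `ℤ₂`-valued Čech 1-cocycle,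
`g` a twisted `G`-valued cocycle and `ghat` lifts through `q`, the obstruction elements
`a i j k = ghat i j · σ̂(ε i j)(ghat j k) · (ghat i k)⁻¹` satisfy the twisted Čech 2-cocycle
identity `a i j k · a i k l = σ̂(ε i j)(a j k l) · a i j l`. -/
theorem twisted_two_cocycle_identity {Ghat G : Type*} [Group Ghat] [Group G] (q : Ghat →* G)
    (hcentral : q.ker ≤ Subgroup.center Ghat)
    (σ : ℤˣ →* MulAut G) (σh : ℤˣ →* MulAut Ghat)
    (hcompat : ∀ (ε : ℤˣ) (x : Ghat), q (σh ε x) = σ ε (q x))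
    {I : Type*} (ε : I → I → ℤˣ)
    (hε : ∀ i j k, ε i j * ε j k = ε i k)
    (g : I → I → G)
    (hg : ∀ i j k, g i j * σ (ε i j) (g j k) = g i k)
    (ghat : I → I → Ghat) (hlift : ∀ i j, q (ghat i j) = g i j)
    (a : I → I → I → Ghat)
    (ha : ∀ i j k, a i j k = ghat i j * σh (ε i j) (ghat j k) * (ghat i k)⁻¹) :
    ∀ i j k l, a i j k * a i k l = σh (ε i j) (a j k l) * a i j l := by
  obtain rfl : a = twistedDefect σh ε ghat := funext fun i => funext fun j => funext (ha i j)
  intro i j k l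
  have hlift' : (fun i j => q (ghat i j)) = g := funext fun i => funext (hlift i)
  have hker : σh (ε i j) (twistedDefect σh ε ghat j k l) ∈ q.ker := by
    rw [MonoidHom.mem_ker, hcompat, map_twistedDefect q σh σ hcompat, hlift',
      (twistedDefect_eq_one_iff σ ε g j k l).2 (hg j k l), map_one]
  rw [twistedDefect_mul_twistedDefect σh hε, Subgroup.mem_center_iff.mp (hcentral hker),
    mul_inv_cancel_right]
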